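/- Let G be a group and H ≤ G, and let I be the augmentation ideal of ℤ[G/H]. Define α: ℤ[G/H] ⊗_ℤ I → ℤ[G] ⊗_{ℤ[H]} I by α(gH ⊗ y) = g ⊗ g⁻¹y and β: ℤ[G] ⊗_{ℤ[H]} I → ℤ[G/H] ⊗_ℤ I by β(g ⊗ y) = gH ⊗ gy, where ℤ[G/H] ⊗_ℤ I carries the diagonal G-action and ℤ[G] ⊗_{ℤ[H]} I carries the G-action on the left factor. Then α and β are well-defined mutually inverse G-module isomorphisms. -/

import Mathlib

open Finsupp TensorProduct

variable (G : Type*) [Group G] (H : Subgroup G)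

/-- The augmentation `ℤ[G/H] → ℤ`. -/
noncomputable def epsGH : ((G ⧸ H) →₀ ℤ) →ₗ[ℤ] ℤ :=
  Finsupp.linearCombination ℤ fun _ => (1 : ℤ)

/-- The augmentation ideal `I = ker(ε : ℤ[G/H] → ℤ)`. -/
noncomputable def Iaug : Submodule ℤ ((G ⧸ H) →₀ ℤ) := LinearMap.ker (epsGH G H)

theorem mapDomain_mem_Iaug (g : G) {x : (G ⧸ H) →₀ ℤ} (hx : x ∈ Iaug G H) :
    Finsupp.lmapDomain ℤ ℤ (fun s : G ⧸ H => g • s) x ∈ Iaug G H := by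
  simpa [Iaug, epsGH, LinearMap.mem_ker, Finsupp.linearCombination_mapDomain,
    Function.comp_def] using hx

/-- The action of `g ∈ G` on the augmentation ideal `I ⊆ ℤ[G/H]`. -/
noncomputable def rhoI (g : G) : Iaug G H →ₗ[ℤ] Iaug G H :=
  (Finsupp.lmapDomain ℤ ℤ (fun s : G ⧸ H => g • s)).restrict
    (fun _ hx => mapDomain_mem_Iaug G H g hx)

/-- The submodule of `ℤ[G] ⊗_ℤ I` of relations `gh ⊗ y − g ⊗ h·y` defining the balanced
tensor product `ℤ[G] ⊗_{ℤ[H]} I`. -/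
noncomputable def relSub : Submodule ℤ ((G →₀ ℤ) ⊗[ℤ] (Iaug G H)) :=
  Submodule.span ℤ {z | ∃ (g : G) (h : H) (y : Iaug G H),
    z = Finsupp.single (g * (h : G)) (1 : ℤ) ⊗ₜ y -
      Finsupp.single g (1 : ℤ) ⊗ₜ (rhoI G H (h : G) y)}

/-- The balanced tensor product `ℤ[G] ⊗_{ℤ[H]} I` (the induced module `Ind_H^G I`). -/
noncomputable def IndI := ((G →₀ ℤ) ⊗[ℤ] (Iaug G H)) ⧸ relSub G H

noncomputable instance : AddCommGroup (IndI G H) := by unfold IndI; infer_instance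
noncomputable instance : Module ℤ (IndI G H) := by unfold IndI; infer_instance

/-! The map `α` is well defined because, by the balancing relation `[gh ⊗ y] = [g ⊗ hy]`,
`[gh ⊗ (gh)⁻¹y] = [g ⊗ h(gh)⁻¹y] = [g ⊗ g⁻¹y]` depends only on the coset `gH`; dually `β` kills
the balancing relations because `ghH = gH` and `(gh)y = g(hy)`. On generators `α` and `β` are
visibly inverse to each other, and `α` intertwines the diagonal action with left translation since
`(gg')⁻¹(gy) = g'⁻¹y`. -/

/- Stated for additive maps: the `ℤ`-module structures in the definitions above are
`AddCommGroup.toIntModule`, which agree with the tensor-product and `Finsupp` module structures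
only after unfolding, so the ext lemmas for linear maps do not apply to them directly. -/
theorem finsuppTensor_addMonoidHom_ext {X N M : Type*} [AddCommGroup N] [AddCommGroup M]
    {f f' : (X →₀ ℤ) ⊗[ℤ] N →+ M} (h : ∀ x y, f (single x 1 ⊗ₜ y) = f' (single x 1 ⊗ₜ y)) :
    f = f' := by
  ext z
  induction z using TensorProduct.induction_on with
  | zero => rw [map_zero, map_zero]
  | add z z' hz hz' => rw [map_add, map_add, hz, hz']
  | tmul a y =>
    induction a using Finsupp.induction_linear with
    | zero => rw [zero_tmul, map_zero, map_zero]
    | add a b ha hb => rw [add_tmul, map_add, map_add, ha, hb]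
    | single x n =>
      have hsingle : single x n = n • single x (1 : ℤ) := by simp
      rw [hsingle, ← smul_tmul', map_zsmul, map_zsmul, h]

section InducedModule

variable {G H}

theorem rhoI_mul (a b : G) : rhoI G H (a * b) = rhoI G H a ∘ₗ rhoI G H b := by
  refine LinearMap.ext fun y => Subtype.ext ?_
  change mapDomain _ (y : (G ⧸ H) →₀ ℤ) = mapDomain _ (mapDomain _ _)
  rw [← mapDomain_comp]
  congr 1
  funext s
  exact mul_smul a b s

theorem rhoI_one : rhoI G H 1 = LinearMap.id := by
  refine LinearMap.ext fun y => Subtype.ext ?_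
  change mapDomain (fun s : G ⧸ H => (1 : G) • s) (y : (G ⧸ H) →₀ ℤ) = y
  simp only [one_smul]
  exact mapDomain_id

theorem rhoI_inv_rhoI (g : G) (y : Iaug G H) : rhoI G H g⁻¹ (rhoI G H g y) = y := by
  rw [← LinearMap.comp_apply, ← rhoI_mul, inv_mul_cancel, rhoI_one, LinearMap.id_apply]

theorem rhoI_rhoI_inv (g : G) (y : Iaug G H) : rhoI G H g (rhoI G H g⁻¹ y) = y := by
  simpa using rhoI_inv_rhoI g⁻¹ y

variable (G H) in
noncomputable def IndI.mk : (G →₀ ℤ) ⊗[ℤ] Iaug G H →ₗ[ℤ] IndI G H := (relSub G H).mkQ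

theorem IndI.mk_single_mul_tmul (g : G) (h : H) (y : Iaug G H) :
    IndI.mk G H (single (g * (h : G)) 1 ⊗ₜ y) = IndI.mk G H (single g 1 ⊗ₜ rhoI G H h y) :=
  (Submodule.Quotient.eq _).mpr (Submodule.subset_span ⟨g, h, y, rfl⟩)

theorem IndI.mk_single_tmul_rhoI_inv_eq {a b : G} (hab : a⁻¹ * b ∈ H) (y : Iaug G H) :
    IndI.mk G H (single a 1 ⊗ₜ rhoI G H a⁻¹ y) = IndI.mk G H (single b 1 ⊗ₜ rhoI G H b⁻¹ y) := by
  obtain ⟨h, rfl⟩ : ∃ h : H, b = a * h := ⟨⟨a⁻¹ * b, hab⟩, by simp⟩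
  rw [IndI.mk_single_mul_tmul, ← LinearMap.comp_apply, ← rhoI_mul, mul_inv_rev,
    mul_inv_cancel_left]

theorem IndI.addMonoidHom_ext {M : Type*} [AddCommGroup M] {f f' : IndI G H →+ M}
    (h : ∀ (g : G) (y : Iaug G H),
      f (IndI.mk G H (single g 1 ⊗ₜ y)) = f' (IndI.mk G H (single g 1 ⊗ₜ y))) :
    f = f' := by
  have hmk := finsuppTensor_addMonoidHom_ext (f := f.comp (IndI.mk G H).toAddMonoidHom)
    (f' := f'.comp (IndI.mk G H).toAddMonoidHom) h
  ext x
  obtain ⟨x, rfl⟩ := (relSub G H).mkQ_surjective x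
  exact DFunLike.congr_fun hmk x

theorem cosetTensor_addMonoidHom_ext {M : Type*} [AddCommGroup M]
    {f f' : ((G ⧸ H) →₀ ℤ) ⊗[ℤ] Iaug G H →+ M}
    (h : ∀ (g : G) (y : Iaug G H),
      f (single (g : G ⧸ H) 1 ⊗ₜ y) = f' (single (g : G ⧸ H) 1 ⊗ₜ y)) :
    f = f' :=
  finsuppTensor_addMonoidHom_ext fun s y => QuotientGroup.induction_on s fun g => h g y

variable (G H) in
/-- `α`: `gH ⊗ y ↦ [g ⊗ g⁻¹y]`. -/
noncomputable def tensorToInd : ((G ⧸ H) →₀ ℤ) ⊗[ℤ] Iaug G H →ₗ[ℤ] IndI G H :=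
  TensorProduct.lift <| linearCombination ℤ fun s =>
    Quotient.liftOn' s
      (fun g => IndI.mk G H ∘ₗ TensorProduct.mk ℤ _ _ (single g 1) ∘ₗ rhoI G H g⁻¹)
      fun _ _ hab =>
        LinearMap.ext (IndI.mk_single_tmul_rhoI_inv_eq (QuotientGroup.leftRel_apply.mp hab))

theorem tensorToInd_single_tmul (g : G) (y : Iaug G H) :
    tensorToInd G H (single (g : G ⧸ H) 1 ⊗ₜ y) =
      IndI.mk G H (single g 1 ⊗ₜ rhoI G H g⁻¹ y) := by
  refine (TensorProduct.lift.tmul _ _).trans ?_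
  refine (LinearMap.congr_fun (linearCombination_single _ _ _) y).trans ?_
  exact LinearMap.congr_fun (one_smul ℤ _) y

variable (G H) in
noncomputable def groupTensorToCosetTensor :
    (G →₀ ℤ) ⊗[ℤ] Iaug G H →ₗ[ℤ] ((G ⧸ H) →₀ ℤ) ⊗[ℤ] Iaug G H :=
  TensorProduct.lift <| linearCombination ℤ fun g =>
    TensorProduct.mk ℤ _ _ (single (g : G ⧸ H) 1) ∘ₗ rhoI G H g

theorem groupTensorToCosetTensor_single_tmul (g : G) (y : Iaug G H) :
    groupTensorToCosetTensor G H (single g 1 ⊗ₜ y) = single (g : G ⧸ H) 1 ⊗ₜ rhoI G H g y := by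
  refine (TensorProduct.lift.tmul _ _).trans ?_
  refine (LinearMap.congr_fun (linearCombination_single _ _ _) y).trans ?_
  exact LinearMap.congr_fun (one_smul ℤ _) y

theorem relSub_le_ker_groupTensorToCosetTensor :
    relSub G H ≤ LinearMap.ker (groupTensorToCosetTensor G H) := by
  refine Submodule.span_le.mpr ?_
  rintro _ ⟨g, h, y, rfl⟩
  have hcoset : ((g * h : G) : G ⧸ H) = g := QuotientGroup.mk_mul_of_mem g h.2
  simp only [SetLike.mem_coe, LinearMap.mem_ker, map_sub, groupTensorToCosetTensor_single_tmul,
    hcoset, rhoI_mul, LinearMap.comp_apply, sub_self]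

variable (G H) in
/-- `β`: `[g ⊗ y] ↦ gH ⊗ gy`. -/
noncomputable def indToTensor : IndI G H →ₗ[ℤ] ((G ⧸ H) →₀ ℤ) ⊗[ℤ] Iaug G H :=
  (relSub G H).liftQ _ relSub_le_ker_groupTensorToCosetTensor

theorem indToTensor_mk_single_tmul (g : G) (y : Iaug G H) :
    indToTensor G H (IndI.mk G H (single g 1 ⊗ₜ y)) = single (g : G ⧸ H) 1 ⊗ₜ rhoI G H g y :=
  groupTensorToCosetTensor_single_tmul g y

theorem indToTensor_comp_tensorToInd : indToTensor G H ∘ₗ tensorToInd G H = LinearMap.id :=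
  LinearMap.toAddMonoidHom_injective <| cosetTensor_addMonoidHom_ext fun g y => by
    rw [LinearMap.toAddMonoidHom_coe, LinearMap.toAddMonoidHom_coe, LinearMap.comp_apply,
      tensorToInd_single_tmul, indToTensor_mk_single_tmul, rhoI_rhoI_inv, LinearMap.id_apply]

theorem tensorToInd_comp_indToTensor : tensorToInd G H ∘ₗ indToTensor G H = LinearMap.id :=
  LinearMap.toAddMonoidHom_injective <| IndI.addMonoidHom_ext fun g y => by
    rw [LinearMap.toAddMonoidHom_coe, LinearMap.toAddMonoidHom_coe, LinearMap.comp_apply,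
      indToTensor_mk_single_tmul, tensorToInd_single_tmul, rhoI_inv_rhoI, LinearMap.id_apply]

theorem relSub_le_ker_mk_comp_leftMul (g : G) :
    relSub G H ≤ LinearMap.ker (IndI.mk G H ∘ₗ
      (TensorProduct.map (lmapDomain ℤ ℤ (g * ·)) LinearMap.id).toAddMonoidHom.toIntLinearMap) := by
  refine Submodule.span_le.mpr ?_
  rintro _ ⟨g', h, y, rfl⟩
  rw [SetLike.mem_coe, LinearMap.mem_ker, map_sub, sub_eq_zero]
  simp only [LinearMap.comp_apply, AddMonoidHom.coe_toIntLinearMap, LinearMap.toAddMonoidHom_coe,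
    TensorProduct.map_tmul, lmapDomain_apply, mapDomain_single, LinearMap.id_apply, ← mul_assoc]
  exact IndI.mk_single_mul_tmul _ _ _

variable (G H) in
noncomputable def IndI.leftMul (g : G) : IndI G H →ₗ[ℤ] IndI G H :=
  (relSub G H).liftQ _ (relSub_le_ker_mk_comp_leftMul g)

theorem IndI.leftMul_mk_single_tmul (g g' : G) (y : Iaug G H) :
    IndI.leftMul G H g (IndI.mk G H (single g' 1 ⊗ₜ y)) =
      IndI.mk G H (single (g * g') 1 ⊗ₜ y) := by
  change IndI.mk G H (TensorProduct.map _ _ (single g' 1 ⊗ₜ y)) = _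
  rw [TensorProduct.map_tmul, lmapDomain_apply, mapDomain_single, LinearMap.id_apply]

theorem tensorToInd_map (g : G) (x : ((G ⧸ H) →₀ ℤ) ⊗[ℤ] Iaug G H) :
    tensorToInd G H (TensorProduct.map (lmapDomain ℤ ℤ (g • ·)) (rhoI G H g) x) =
      IndI.leftMul G H g (tensorToInd G H x) := by
  refine DFunLike.congr_fun (cosetTensor_addMonoidHom_ext
    (f := (tensorToInd G H).toAddMonoidHom.comp
      (TensorProduct.map (lmapDomain ℤ ℤ (g • ·)) (rhoI G H g)).toAddMonoidHom)
    (f' := (IndI.leftMul G H g).toAddMonoidHom.comp (tensorToInd G H).toAddMonoidHom)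
    fun g' y => ?_) x
  have hcoset : g • (g' : G ⧸ H) = (g * g' : G) := rfl
  simp only [AddMonoidHom.comp_apply, LinearMap.toAddMonoidHom_coe, TensorProduct.map_tmul,
    lmapDomain_apply, mapDomain_single, hcoset, tensorToInd_single_tmul,
    IndI.leftMul_mk_single_tmul, mul_inv_rev, rhoI_mul, LinearMap.comp_apply, rhoI_inv_rhoI]

end InducedModule

/-- `α : ℤ[G/H] ⊗_ℤ I → ℤ[G] ⊗_{ℤ[H]} I`, `gH ⊗ y ↦ g ⊗ g⁻¹y`, and
`β : g ⊗ y ↦ gH ⊗ gy` are well-defined, mutually inverse `G`-module isomorphisms, where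
`ℤ[G/H] ⊗_ℤ I` carries the diagonal action and `ℤ[G] ⊗_{ℤ[H]} I` the action on the left
factor. -/
theorem tensor_iso_induced_module :
    ∃ (α : (((G ⧸ H) →₀ ℤ) ⊗[ℤ] (Iaug G H)) ≃ₗ[ℤ] IndI G H)
      (L : G → IndI G H →ₗ[ℤ] IndI G H),
      (∀ (g g' : G) (y : Iaug G H),
        L g (Submodule.Quotient.mk (Finsupp.single g' (1 : ℤ) ⊗ₜ y)) =
          Submodule.Quotient.mk (Finsupp.single (g * g') (1 : ℤ) ⊗ₜ y)) ∧
      (∀ (g : G) (y : Iaug G H),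
        α (Finsupp.single ((g : G ⧸ H)) (1 : ℤ) ⊗ₜ y) =
          Submodule.Quotient.mk (Finsupp.single g (1 : ℤ) ⊗ₜ (rhoI G H g⁻¹ y))) ∧
      (∀ (g : G) (x : ((G ⧸ H) →₀ ℤ) ⊗[ℤ] (Iaug G H)),
        α (TensorProduct.map (Finsupp.lmapDomain ℤ ℤ (fun s : G ⧸ H => g • s))
            (rhoI G H g) x) = L g (α x)) ∧
      (∀ (g : G) (y : Iaug G H),
        α.symm (Submodule.Quotient.mk (Finsupp.single g (1 : ℤ) ⊗ₜ y)) =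
          Finsupp.single ((g : G ⧸ H)) (1 : ℤ) ⊗ₜ (rhoI G H g y)) :=
  ⟨.ofLinearMap (tensorToInd G H) (indToTensor G H) tensorToInd_comp_indToTensor
      indToTensor_comp_tensorToInd,
    IndI.leftMul G H, IndI.leftMul_mk_single_tmul, tensorToInd_single_tmul, tensorToInd_map,
    indToTensor_mk_single_tmul⟩
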